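/- Let W_1, ..., W_t be subsets of a finite set W, and let λ ≥ 1 be a real parameter such that the sum over all ordered pairs i ≠ j of |W_i ∩ W_j| is at most λ times the sum over i of |W_i|. Then the cardinality of the union of the W_i is at least (1/(4λ)) times the sum of the |W_i|. -/

import Mathlib

/-!
Let `d x` be the number of sets `W_i` containing `x`. Double counting gives `∑ |W_i| = ∑ d x`
and `∑_{i ≠ j} |W_i ∩ W_j| = ∑ (d x ^ 2 - d x)`, so the hypothesis says `∑ d x ^ 2 ≤ (λ + 1) ∑ d x`.
By Cauchy–Schwarz over the union `U`, `(∑ d x) ^ 2 ≤ |U| ∑ d x ^ 2 ≤ |U| (λ + 1) ∑ d x`, hence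
`∑ |W_i| ≤ (λ + 1) |U| ≤ 4λ |U|`.
-/

open Finset

namespace Finset

variable {ι α : Type*} [Fintype ι] [DecidableEq α] {s : Finset α} {W : ι → Finset α}

theorem sum_card_eq_sum_card_filter_mem (h : ∀ i, W i ⊆ s) :
    ∑ i, #(W i) = ∑ x ∈ s, #{i | x ∈ W i} := by
  calc ∑ i, #(W i) = ∑ i, #(s.bipartiteAbove (fun i x => x ∈ W i) i) :=
        sum_congr rfl fun i _ => by
          rw [bipartiteAbove, filter_mem_eq_inter, inter_eq_right.mpr (h i)]
    _ = ∑ x ∈ s, #{i | x ∈ W i} := sum_card_bipartiteAbove_eq_sum_card_bipartiteBelow _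

theorem sum_sum_card_inter_eq_sum_sq (h : ∀ i, W i ⊆ s) :
    ∑ i, ∑ j, #(W i ∩ W j) = ∑ x ∈ s, #{i | x ∈ W i} ^ 2 := by
  rw [← Fintype.sum_prod_type' (f := fun i j => #(W i ∩ W j)),
    sum_card_eq_sum_card_filter_mem (W := fun p : ι × ι => W p.1 ∩ W p.2)
      fun p => inter_subset_left.trans (h p.1)]
  refine sum_congr rfl fun x _ => ?_
  rw [sq, ← card_product]
  congr 1
  ext
  simp

theorem sum_sum_erase_card_inter_add_sum_card [DecidableEq ι] (h : ∀ i, W i ⊆ s) :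
    ∑ i, ∑ j ∈ univ.erase i, #(W i ∩ W j) + ∑ i, #(W i) =
      ∑ x ∈ s, #{i | x ∈ W i} ^ 2 := by
  rw [← sum_sum_card_inter_eq_sum_sq h, ← sum_add_distrib]
  refine sum_congr rfl fun i _ => ?_
  conv_rhs => rw [← sum_erase_add _ _ (mem_univ i), inter_self]

theorem sum_le_mul_card_of_sum_sq_le {β : Type*} {s : Finset β} {f : β → ℝ} {c : ℝ}
    (hc : 0 ≤ c) (h : ∑ x ∈ s, f x ^ 2 ≤ c * ∑ x ∈ s, f x) :
    ∑ x ∈ s, f x ≤ c * #s := by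
  rcases le_or_gt (∑ x ∈ s, f x) 0 with hneg | hpos
  · exact hneg.trans (by positivity)
  · have hcs : (∑ x ∈ s, f x) ^ 2 ≤ #s * (c * ∑ x ∈ s, f x) :=
      (sq_sum_le_card_mul_sum_sq).trans (by gcongr)
    nlinarith

end Finset

theorem strong_inclusion_exclusion_general {α : Type*} [DecidableEq α]
    (t : ℕ) (Ws : Fin t → Finset α)
    (lam : ℝ) (hlam : 1 ≤ lam)
    (h : (∑ i : Fin t, ∑ j ∈ Finset.univ.erase i, ((Ws i ∩ Ws j).card : ℝ))
          ≤ lam * ∑ i : Fin t, ((Ws i).card : ℝ)) :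
    (1 / (4 * lam)) * ∑ i : Fin t, ((Ws i).card : ℝ)
      ≤ ((Finset.univ.biUnion Ws).card : ℝ) := by
  set U := univ.biUnion Ws
  have hsub : ∀ i, Ws i ⊆ U := fun i => subset_biUnion_of_mem Ws (mem_univ i)
  have hsum : ∑ i, (#(Ws i) : ℝ) = ∑ x ∈ U, (#{i | x ∈ Ws i} : ℝ) := by
    exact_mod_cast sum_card_eq_sum_card_filter_mem hsub
  have hsq : ∑ i, ∑ j ∈ univ.erase i, (#(Ws i ∩ Ws j) : ℝ) + ∑ i, (#(Ws i) : ℝ) =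
      ∑ x ∈ U, (#{i | x ∈ Ws i} : ℝ) ^ 2 := by
    exact_mod_cast sum_sum_erase_card_inter_add_sum_card hsub
  have hbound : ∑ i, (#(Ws i) : ℝ) ≤ (lam + 1) * #U := by
    rw [hsum] at h hsq ⊢
    exact sum_le_mul_card_of_sum_sq_le (by linarith) (by linarith)
  rw [div_mul_eq_mul_div, one_mul, div_le_iff₀ (by positivity)]
  nlinarith

/-- Strong Inclusion-Exclusion (Kumar–Saraf): if the sum over ordered pairs `i ≠ j` of
`|W_i ∩ W_j|` is at most `λ` times `∑ |W_i|` (with `λ ≥ 1`), then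
`|⋃ W_i| ≥ (1/(4λ)) ∑ |W_i|`. -/
theorem strong_inclusion_exclusion {α : Type*} [DecidableEq α]
    (W : Finset α) (t : ℕ) (ht : 0 < t) (Ws : Fin t → Finset α)
    (hsub : ∀ i, Ws i ⊆ W) (lam : ℝ) (hlam : 1 ≤ lam)
    (h : (∑ i : Fin t, ∑ j ∈ Finset.univ.erase i, ((Ws i ∩ Ws j).card : ℝ))
          ≤ lam * ∑ i : Fin t, ((Ws i).card : ℝ)) :
    (1 / (4 * lam)) * ∑ i : Fin t, ((Ws i).card : ℝ)
      ≤ ((Finset.univ.biUnion Ws).card : ℝ) :=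
  strong_inclusion_exclusion_general t Ws lam hlam h
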